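/- arXiv:math/0509282 — 4 statements merged into one kernel-verified Lean document; each statement's English description precedes it below -/
import Mathlib

section
/- Let S be a subsemigroup of the natural numbers under addition, and let e = gcd(S). Then every sufficiently large multiple of e belongs to S; in particular, if gcd(S) = 1, then all sufficiently large natural numbers belong to S. -/
theorem gcd_of_add_subsemigroup_eventually_mem
    (S : Set ℕ) (hadd : ∀ a ∈ S, ∀ b ∈ S, a + b ∈ S)
    (e : ℕ) (he_dvd : ∀ s ∈ S, e ∣ s)
    (he_gcd : ∀ d : ℕ, (∀ s ∈ S, d ∣ s) → d ∣ e) :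
    ∃ N : ℕ, ∀ n ≥ N, e ∣ n → n ∈ S := by
  by_cases he : e = 0
  · refine ⟨1, fun n hn hdvd => ?_⟩
    subst he
    have : n = 0 := Nat.eq_zero_of_zero_dvd hdvd
    omega
  -- multiples of elements stay in S
  have hmul : ∀ s ∈ S, ∀ k : ℕ, 1 ≤ k → k * s ∈ S := by
    intro s hs k hk
    induction k with
    | zero => omega
    | succ k ih =>
      rcases Nat.eq_or_lt_of_le hk with h | h
      · simpa [← h] using hs
      · have := ih (by omega)
        have := hadd s hs (k * s) this
        convert this using 1
        ring
  -- the integer subgroup generated by S is eℤ, so e = u - v with u v ∈ S ∪ {0}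
  set H : AddSubgroup ℤ := AddSubgroup.closure ((Nat.cast : ℕ → ℤ) '' S) with hH
  have hHe : ∀ x ∈ H, (e : ℤ) ∣ x := by
    intro x hx
    refine AddSubgroup.closure_induction (p := fun x _ => (e : ℤ) ∣ x) ?_ ?_ ?_ ?_ hx
    · rintro _ ⟨s, hs, rfl⟩
      exact_mod_cast (he_dvd s hs).natCast (α := ℤ)
    · exact dvd_zero _
    · intro x y _ _ hx hy; exact dvd_add hx hy
    · intro x _ hx; exact hx.neg_right
  obtain ⟨g, hg⟩ := Int.subgroup_cyclic H
  have hgH : g ∈ H := by rw [hg]; exact AddSubgroup.subset_closure rfl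
  have hge : (e : ℤ) ∣ g := hHe g hgH
  have hgdvd : ∀ s ∈ S, g.natAbs ∣ s := by
    intro s hs
    have hsH : (s : ℤ) ∈ H := AddSubgroup.subset_closure ⟨s, hs, rfl⟩
    rw [hg, AddSubgroup.mem_closure_singleton] at hsH
    obtain ⟨n, hn⟩ := hsH
    have : g ∣ (s : ℤ) := Dvd.intro_left n (by simpa [zsmul_eq_mul] using hn)
    simpa using Int.natAbs_dvd_natAbs.mpr this
  have h1 : g.natAbs ∣ e := he_gcd _ hgdvd
  have h2 : e ∣ g.natAbs := by
    simpa using Int.natAbs_dvd_natAbs.mpr hge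
  have heg : g.natAbs = e := Nat.dvd_antisymm h1 h2
  have heH : (e : ℤ) ∈ H := by
    rcases Int.natAbs_eq g with h | h
    · rw [← heg, ← h]; exact hgH
    · rw [← heg]
      have : -g ∈ H := neg_mem hgH
      simpa [← h] using this
  -- e = u - v with u, v ∈ S ∪ {0}
  have hdiff : ∃ u v : ℕ, (u ∈ S ∨ u = 0) ∧ (v ∈ S ∨ v = 0) ∧ (e : ℤ) = (u : ℤ) - v := by
    refine AddSubgroup.closure_induction
      (p := fun x _ => ∃ u v : ℕ, (u ∈ S ∨ u = 0) ∧ (v ∈ S ∨ v = 0) ∧ x = (u : ℤ) - v)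
      ?_ ?_ ?_ ?_ heH
    · rintro _ ⟨s, hs, rfl⟩
      exact ⟨s, 0, Or.inl hs, Or.inr rfl, by simp⟩
    · exact ⟨0, 0, Or.inr rfl, Or.inr rfl, by simp⟩
    · rintro x y _ _ ⟨u, v, hu, hv, rfl⟩ ⟨u', v', hu', hv', rfl⟩
      refine ⟨u + u', v + v', ?_, ?_, by push_cast; ring⟩
      · rcases hu with hu | hu
        · rcases hu' with hu' | hu'
          · exact Or.inl (hadd u hu u' hu')
          · subst hu'; simpa using Or.inl hu
        · subst hu; simpa using hu'
      · rcases hv with hv | hv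
        · rcases hv' with hv' | hv'
          · exact Or.inl (hadd v hv v' hv')
          · subst hv'; simpa using Or.inl hv
        · subst hv; simpa using hv'
    · rintro x _ ⟨u, v, hu, hv, rfl⟩
      exact ⟨v, u, hv, hu, by ring⟩
  obtain ⟨u, v, hu, hv, huv⟩ := hdiff
  have huve : u = v + e := by omega
  -- split on whether v = 0
  rcases Nat.eq_zero_or_pos v with hv0 | hv0
  · -- then e ∈ S, so all positive multiples of e are in S
    subst hv0
    have heS : e ∈ S := by
      rcases hu with hu | hu
      · simpa [huve] using hu
      · omega
    refine ⟨e, fun n hn hdvd => ?_⟩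
    obtain ⟨k, rfl⟩ := hdvd
    have hk : 1 ≤ k := by
      rcases Nat.eq_zero_or_pos k with rfl | h
      · omega
      · exact h
    have := hmul e heS k hk
    simpa [Nat.mul_comm] using this
  · have hvS : v ∈ S := by
      rcases hv with h | h
      · exact h
      · omega
    have huS : u ∈ S := by
      rcases hu with h | h
      · exact h
      · omega
    obtain ⟨w, hw⟩ := he_dvd v hvS
    have hw1 : 1 ≤ w := by
      rcases Nat.eq_zero_or_pos w with rfl | h
      · omega
      · exact h
    refine ⟨e * (w * (w + 1)), fun n hn hdvd => ?_⟩
    obtain ⟨m, rfl⟩ := hdvd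
    have hm : w * (w + 1) ≤ m := Nat.le_of_mul_le_mul_left hn (by omega)
    set c := (m + w) / (w + 1) with hc
    have e1 : (w + 1) * c + (m + w) % (w + 1) = m + w := Nat.div_add_mod _ _
    have e2 : (w + 1) * c = c * w + c := by ring
    have e3 : w * (w + 1) = w * w + w := by ring
    have hmod : (m + w) % (w + 1) ≤ w := by
      have := Nat.mod_lt (m + w) (y := w + 1) (by omega)
      omega
    have hcw : w ≤ c := by
      by_contra hlt
      push_neg at hlt
      have h4 : c * w + c < w * w + w := by nlinarith
      omega
    have hcwm : c * w ≤ m := by omega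
    have hc1 : 1 ≤ c := le_trans hw1 hcw
    set j := m - c * w with hj
    have hjc : j ≤ c := by omega
    have hmem : j * u + (c - j) * v ∈ S := by
      rcases Nat.eq_zero_or_pos j with hj0 | hj0
      · rw [hj0]
        simpa using hmul v hvS (c - 0) (by omega)
      · rcases Nat.eq_or_lt_of_le hjc with hjc' | hjc'
        · rw [hjc', Nat.sub_self]
          simpa using hmul u huS c hc1
        · exact hadd _ (hmul u huS j hj0) _ (hmul v hvS (c - j) (by omega))
    have hval : j * u + (c - j) * v = e * m := by
      have hr : j + (c - j) = c := by omega
      calc j * u + (c - j) * v = (j + (c - j)) * v + j * e := by rw [huve]; ring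
        _ = c * (e * w) + (m - c * w) * e := by rw [hr, hw, hj]
        _ = e * m := by zify [hcwm]; ring
    rw [← hval]
    exact hmem
end

section
/- Let X be a noetherian topological space and let V_n (n ≥ 1) be closed subsets of X satisfying V_{m+n} ⊆ V_m ∪ V_n for all m, n ≥ 1. Then there exists N ∈ ℕ such that the intersection B = ⋂_{n ≥ 1} V_n equals ⋂_{i=1}^{N} V_i, and moreover V_{kN!} ⊆ B for all k ≥ 1 (hence V_{kN!} = B for all k ≥ 1 if B ⊆ V_n for all n). -/
open TopologicalSpace

theorem cosupport_stabilizes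
    {X : Type*} [TopologicalSpace X] [TopologicalSpace.NoetherianSpace X]
    (V : ℕ → Set X) (hclosed : ∀ n, 1 ≤ n → IsClosed (V n))
    (hsub : ∀ m n : ℕ, 1 ≤ m → 1 ≤ n → V (m + n) ⊆ V m ∪ V n) :
    ∃ N : ℕ, 1 ≤ N ∧
      (⋂ n ∈ {n : ℕ | 1 ≤ n}, V n) = (⋂ i ∈ Finset.Icc 1 N, V i) ∧
      ∀ k : ℕ, 1 ≤ k → V (k * N.factorial) ⊆ ⋂ n ∈ {n : ℕ | 1 ≤ n}, V n := by
  -- multiples: V (m * n) ⊆ V n for m, n ≥ 1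
  have hmult : ∀ m n : ℕ, 1 ≤ m → 1 ≤ n → V (m * n) ⊆ V n := by
    intro m
    induction m with
    | zero => intro n hm; exact absurd hm (by omega)
    | succ m ih =>
      intro n _ hn
      rcases Nat.eq_zero_or_pos m with hm0 | hm0
      · subst hm0; simp
      · have : (m + 1) * n = m * n + n := by ring
        rw [this]
        refine (hsub (m * n) n (Nat.mul_pos hm0 hn) hn).trans ?_
        exact Set.union_subset (ih n hm0 hn) (Set.Subset.refl _)
  -- the finite intersections
  set C : ℕ → Set X := fun N => ⋂ i ∈ Finset.Icc 1 N, V i with hC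
  have hCclosed : ∀ N, IsClosed (C N) := by
    intro N
    exact isClosed_biInter (fun i hi => hclosed i (Finset.mem_Icc.mp hi).1)
  have hCanti : ∀ {M N : ℕ}, M ≤ N → C N ⊆ C M := by
    intro M N h x hx
    simp only [hC, Set.mem_iInter] at hx ⊢
    intro i hi
    rw [Finset.mem_Icc] at hi
    exact hx i (Finset.mem_Icc.mpr ⟨hi.1, le_trans hi.2 h⟩)
  -- stabilization via well-foundedness
  obtain ⟨b, ⟨N, rfl⟩, hmin⟩ :=
    (IsWellFounded.wf (r := ((· < ·) : Closeds X → Closeds X → Prop))).has_min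
      (Set.range fun N => (⟨C N, hCclosed N⟩ : Closeds X)) ⟨_, ⟨0, rfl⟩⟩
  have hstab : ∀ M, N ≤ M → C M = C N := by
    intro M hM
    have hle : (⟨C M, hCclosed M⟩ : Closeds X) ≤ ⟨C N, hCclosed N⟩ := hCanti hM
    rcases eq_or_lt_of_le hle with heq | hlt
    · exact congrArg SetLike.coe heq
    · exact absurd hlt (hmin _ ⟨M, rfl⟩)
  have hCN_sub : ∀ n : ℕ, 1 ≤ n → C N ⊆ V n := by
    intro n hn
    have h1 : C (max N n) = C N := hstab _ (le_max_left _ _)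
    rw [← h1]
    intro x hx
    have : x ∈ ⋂ i ∈ Finset.Icc 1 (max N n), V i := hx
    simp only [Set.mem_iInter] at this
    exact this n (Finset.mem_Icc.mpr ⟨hn, le_max_right _ _⟩)
  refine ⟨max N 1, le_max_right _ _, ?_, ?_⟩
  · apply Set.Subset.antisymm
    · intro x hx
      simp only [Set.mem_iInter] at hx ⊢
      intro i hi
      exact hx i (Finset.mem_Icc.mp hi).1
    · intro x hx
      have hxCN : x ∈ C N := hCanti (le_max_left N 1) hx
      simp only [Set.mem_iInter, Set.mem_setOf_eq]
      intro n hn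
      exact hCN_sub n hn hxCN
  · intro k hk x hx
    have hxCN : x ∈ C N := by
      rw [hC]
      simp only [Set.mem_iInter]
      intro n hn
      rw [Finset.mem_Icc] at hn
      -- n divides (max N 1)!, so k * (max N 1)! is a positive multiple of n
      have hdvd : n ∣ (max N 1).factorial :=
        Nat.dvd_factorial (by omega) (le_trans hn.2 (le_max_left _ _))
      obtain ⟨c, hc⟩ := hdvd
      have hc1 : 1 ≤ c := by
        rcases Nat.eq_zero_or_pos c with h0 | h
        · subst h0
          rw [Nat.mul_zero] at hc
          exact absurd hc (Nat.factorial_pos _).ne'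
        · exact h
      have : k * (max N 1).factorial = (k * c) * n := by rw [hc]; ring
      rw [this] at hx
      exact hmult (k * c) n (Nat.mul_pos hk hc1) hn.1 hx
    simp only [Set.mem_iInter, Set.mem_setOf_eq]
    intro n hn
    exact hCN_sub n hn hxCN
end

section
/- Let m = (x,y) ⊆ ℂ[x,y], ε > 0, and a_n = m^{⌊εn⌋}(x^n, y). If C, D are constants such that m^{⌊ε(Cn+D)⌋} ⊆ a_n for all sufficiently large n, then C ≥ 1 + 1/ε. -/
/-!
The power `x ^ ⌊ε(Cn+D)⌋` lies in `m ^ ⌊ε(Cn+D)⌋ ⊆ a n`. Setting `y = 0` maps `a n` onto the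
principal ideal `(x ^ (⌊εn⌋ + n))` of `ℂ[x]`, so `⌊εn⌋ + n ≤ ⌊ε(Cn+D)⌋` for all large `n`. Hence
`(1 + ε - εC) n < 1 + εD` eventually, which forces `1 + ε - εC ≤ 0`.
-/

open MvPolynomial Filter

lemma Polynomial.le_of_X_pow_dvd_X_pow {R : Type*} [CommSemiring R] [Nontrivial R] {n k : ℕ}
    (h : (Polynomial.X : Polynomial R) ^ n ∣ Polynomial.X ^ k) : n ≤ k := by
  by_contra! hkn
  simpa using Polynomial.X_pow_dvd_iff.mp h k hkn

lemma MvPolynomial.add_le_of_X_pow_mem_span_pow_mul_span {R σ : Type*} [CommSemiring R]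
    [Nontrivial R] {i j : σ} (hij : i ≠ j) {a n k : ℕ}
    (h : (X i : MvPolynomial σ R) ^ k ∈ Ideal.span {X i, X j} ^ a * Ideal.span {X i ^ n, X j}) :
    a + n ≤ k := by
  classical
  let φ : MvPolynomial σ R →+* Polynomial R := (aeval (Pi.single i Polynomial.X)).toRingHom
  have hφi : φ (X i) = Polynomial.X := by simp [φ]
  have hφj : φ (X j) = 0 := by simp [φ, hij.symm]
  have hmem := Ideal.mem_map_of_mem φ h
  simp only [Ideal.map_mul, Ideal.map_pow, Ideal.map_span, Set.image_pair, map_pow, hφi, hφj,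
    Set.pair_comm _ (0 : Polynomial R), Ideal.span_insert_zero, Ideal.span_singleton_pow,
    Ideal.span_singleton_mul_span_singleton, ← pow_add, Ideal.mem_span_singleton] at hmem
  exact Polynomial.le_of_X_pow_dvd_X_pow hmem

lemma nonpos_of_eventually_mul_natCast_lt {K : Type*} [Field K] [LinearOrder K]
    [IsStrictOrderedRing K] [Archimedean K] {δ b : K}
    (h : ∀ᶠ n : ℕ in atTop, δ * n < b) : δ ≤ 0 := by
  by_contra! hδ
  have hlarge : ∀ᶠ n : ℕ in atTop, b ≤ δ * n :=
    (tendsto_natCast_atTop_atTop.const_mul_atTop hδ).eventually_ge_atTop b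
  obtain ⟨n, hlt, hge⟩ := (h.and hlarge).exists
  exact hlt.not_ge hge

lemma le_of_eventually_floor_mul_add_le_floor {K : Type*} [Field K] [LinearOrder K]
    [IsStrictOrderedRing K] [FloorSemiring K] [Archimedean K] {ε C D : K} (hε : 0 < ε)
    (h : ∀ᶠ n : ℕ in atTop, ⌊ε * n⌋₊ + n ≤ ⌊ε * (C * n + D)⌋₊) : 1 + 1 / ε ≤ C := by
  have hslope : 1 + ε - ε * C ≤ 0 := by
    refine nonpos_of_eventually_mul_natCast_lt (b := 1 + ε * D) ?_
    filter_upwards [h, eventually_gt_atTop 0] with n hn hn0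
    have hfloor : ((⌊ε * n⌋₊ + n : ℕ) : K) ≤ ε * (C * n + D) :=
      (Nat.le_floor_iff' (by omega)).mp hn
    push_cast at hfloor
    linarith [Nat.sub_one_lt_floor (ε * n)]
  rw [one_add_div hε.ne', div_le_iff₀ hε]
  linarith

theorem epsilon_graded_system_constant_bound
    (ε : ℚ) (hε : 0 < ε)
    (m : Ideal (MvPolynomial (Fin 2) ℂ))
    (hm : m = Ideal.span {X 0, X 1})
    (a : ℕ → Ideal (MvPolynomial (Fin 2) ℂ))
    (ha : ∀ n : ℕ, a n = m ^ (⌊ε * n⌋₊) * Ideal.span {(X 0 : MvPolynomial (Fin 2) ℂ) ^ n, X 1})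
    (C D : ℚ)
    (hcontain : ∃ N : ℕ, ∀ n ≥ N, m ^ (⌊ε * (C * n + D)⌋₊) ≤ a n) :
    C ≥ 1 + 1 / ε := by
  refine le_of_eventually_floor_mul_add_le_floor (D := D) hε ?_
  filter_upwards [eventually_atTop.mpr hcontain] with n hn
  have hX : (X 0 : MvPolynomial (Fin 2) ℂ) ^ ⌊ε * (C * n + D)⌋₊ ∈ m ^ ⌊ε * (C * n + D)⌋₊ :=
    Ideal.pow_mem_pow (hm ▸ Ideal.subset_span (Set.mem_insert _ _)) _
  have hXa := hn hX
  rw [ha, hm] at hXa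
  exact add_le_of_X_pow_mem_span_pow_mul_span (by decide) hXa
end

section
/- Let R be a commutative noetherian ring, J ⊆ R an ideal and B = V(J). Suppose b• is a sequence of ideals such that b_{m+n} ⊆ b_m · b_n (a reverse graded system), b_{n₁} ⊆ J for some n₁, and there exist relatively prime n₁ < n₂ and integers ν₁, ν₂ with J^{ν_i} ⊆ a_{n_i} for ideals a_{n₁}, a_{n₂} of a graded system a•. Then there exist constants C, D such that b_{⌈Cn + D⌉} ⊆ a_n for all sufficiently large n. -/
/-- Representation with positive coefficients for large `n`. -/
lemma rep_pos {n₁ n₂ : ℕ} (h₁ : 1 ≤ n₁) (hlt : n₁ < n₂) (hcop : Nat.Coprime n₁ n₂) :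
    ∀ n, n₁ * n₂ + n₁ + n₂ ≤ n → ∃ m₁ m₂ : ℕ, 1 ≤ m₁ ∧ 1 ≤ m₂ ∧ n = m₁ * n₁ + m₂ * n₂ := by
  intro n hn
  rcases eq_or_lt_of_le h₁ with h1 | h1
  · -- n₁ = 1
    refine ⟨n - n₂, 1, by omega, le_refl 1, ?_⟩
    rw [← h1]
    omega
  · -- 1 < n₁
    have hfrob := frobeniusNumber_pair hcop h1 (lt_trans h1 hlt)
    rw [FrobeniusNumber] at hfrob
    have hk : n₁ * n₂ - n₁ - n₂ < n - n₁ - n₂ := by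
      have : 1 ≤ n₁ * n₂ := Nat.one_le_iff_ne_zero.mpr (Nat.mul_ne_zero (by omega) (by omega))
      omega
    have hmem : (n - n₁ - n₂) ∈ AddSubmonoid.closure ({n₁, n₂} : Set ℕ) := by
      by_contra hc
      exact absurd (hfrob.2 hc) (not_le.mpr hk)
    rw [AddSubmonoid.mem_closure_pair] at hmem
    obtain ⟨x, y, hxy⟩ := hmem
    refine ⟨x + 1, y + 1, Nat.le_add_left 1 x, Nat.le_add_left 1 y, ?_⟩
    simp only [smul_eq_mul] at hxy
    have hnn : n₁ * n₂ ≤ n := by omega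
    rw [add_mul, add_mul, one_mul, one_mul]
    omega

lemma b_pow {R : Type*} [CommRing R] (b : ℕ → Ideal R)
    (hrev : ∀ m n : ℕ, 1 ≤ m → 1 ≤ n → b (m + n) ≤ b m * b n)
    (i : ℕ) (hi : 1 ≤ i) : ∀ k : ℕ, 1 ≤ k → b (k * i) ≤ b i ^ k := by
  intro k
  induction k with
  | zero => intro h; omega
  | succ k ih =>
    intro _
    rcases Nat.eq_zero_or_pos k with h | h
    · subst h; simp
    · have hk : 1 ≤ k := by omega
      have h1 : b ((k + 1) * i) ≤ b (k * i) * b i := by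
        have := hrev (k * i) i (Nat.one_le_iff_ne_zero.mpr (Nat.mul_ne_zero (by omega) (by omega))) hi
        rwa [add_one_mul]
      calc b ((k + 1) * i) ≤ b (k * i) * b i := h1
        _ ≤ b i ^ k * b i := Ideal.mul_mono_left (ih hk)
        _ = b i ^ (k + 1) := (pow_succ _ _).symm

lemma a_pow {R : Type*} [CommRing R] (a : ℕ → Ideal R)
    (hgraded : ∀ m n : ℕ, 1 ≤ m → 1 ≤ n → a m * a n ≤ a (m + n))
    (i : ℕ) (hi : 1 ≤ i) : ∀ k : ℕ, 1 ≤ k → a i ^ k ≤ a (k * i) := by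
  intro k
  induction k with
  | zero => intro h; omega
  | succ k ih =>
    intro _
    rcases Nat.eq_zero_or_pos k with h | h
    · subst h; simp
    · have hk : 1 ≤ k := by omega
      calc a i ^ (k + 1) = a i ^ k * a i := pow_succ _ _
        _ ≤ a (k * i) * a i := Ideal.mul_mono_left (ih hk)
        _ ≤ a (k * i + i) := hgraded _ _ (Nat.one_le_iff_ne_zero.mpr (Nat.mul_ne_zero (by omega) (by omega))) hi
        _ = a ((k + 1) * i) := by rw [add_one_mul]

theorem brianconSkoda_abstract
    {R : Type*} [CommRing R] [IsNoetherianRing R]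
    (J : Ideal R) (b : ℕ → Ideal R)
    (hrev : ∀ m n : ℕ, 1 ≤ m → 1 ≤ n → b (m + n) ≤ b m * b n)
    (a : ℕ → Ideal R)
    (hgraded : ∀ m n : ℕ, 1 ≤ m → 1 ≤ n → a m * a n ≤ a (m + n))
    (n₁ n₂ : ℕ) (h₁ : 1 ≤ n₁) (hlt : n₁ < n₂) (hcop : Nat.Coprime n₁ n₂)
    (hb : b n₁ ≤ J)
    (ν₁ ν₂ : ℕ) (hν₁ : J ^ ν₁ ≤ a n₁) (hν₂ : J ^ ν₂ ≤ a n₂) :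
    ∃ C D : ℚ, 0 < C ∧ 0 ≤ D ∧
      ∃ N : ℕ, ∀ n ≥ N, b ⌈C * n + D⌉₊ ≤ a n := by
  refine ⟨(n₁ * (ν₁ + ν₂ + 1) : ℕ), 0, ?_, le_refl 0, n₁ * n₂ + n₁ + n₂, ?_⟩
  · have : 1 ≤ n₁ * (ν₁ + ν₂ + 1) := Nat.one_le_iff_ne_zero.mpr (Nat.mul_ne_zero (by omega) (by omega))
    exact_mod_cast Nat.lt_of_lt_of_le Nat.zero_lt_one this
  intro n hn
  obtain ⟨m₁, m₂, hm₁, hm₂, hrepr⟩ := rep_pos h₁ hlt hcop n hn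
  have hn1 : 1 ≤ n := le_trans (by nlinarith) hn
  -- compute the ceiling
  have hceil : ⌈((n₁ * (ν₁ + ν₂ + 1) : ℕ) : ℚ) * (n : ℚ) + 0⌉₊ = n₁ * ((ν₁ + ν₂ + 1) * n) := by
    rw [add_zero, ← Nat.cast_mul, Nat.ceil_natCast, mul_assoc]
  rw [hceil]
  set k : ℕ := (ν₁ + ν₂ + 1) * n with hk
  have hk1 : 1 ≤ k := Nat.one_le_iff_ne_zero.mpr (Nat.mul_ne_zero (by omega) (by omega))
  -- bounds on m₁ m₂
  have hm₁n : m₁ ≤ n := by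
    calc m₁ ≤ m₁ * n₁ := Nat.le_mul_of_pos_right m₁ h₁
      _ ≤ n := by omega
  have hm₂n : m₂ ≤ n := by
    calc m₂ ≤ m₂ * n₂ := Nat.le_mul_of_pos_right m₂ (by omega)
      _ ≤ n := by omega
  have hkge : m₁ * ν₁ + m₂ * ν₂ ≤ k := by
    calc m₁ * ν₁ + m₂ * ν₂ ≤ n * ν₁ + n * ν₂ :=
          Nat.add_le_add (Nat.mul_le_mul_right _ hm₁n) (Nat.mul_le_mul_right _ hm₂n)
      _ ≤ (ν₁ + ν₂ + 1) * n := by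
          rw [add_mul, add_mul, mul_comm n ν₁, mul_comm n ν₂]; omega
  calc b (n₁ * k) = b (k * n₁) := by rw [mul_comm]
    _ ≤ b n₁ ^ k := b_pow b hrev n₁ h₁ k hk1
    _ ≤ J ^ k := Ideal.pow_right_mono hb k
    _ ≤ J ^ (m₁ * ν₁ + m₂ * ν₂) := Ideal.pow_le_pow_right hkge
    _ = (J ^ ν₁) ^ m₁ * (J ^ ν₂) ^ m₂ := by rw [pow_add, ← pow_mul, ← pow_mul,
          mul_comm m₁ ν₁, mul_comm m₂ ν₂]
    _ ≤ a n₁ ^ m₁ * a n₂ ^ m₂ :=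
          Ideal.mul_mono (Ideal.pow_right_mono hν₁ m₁) (Ideal.pow_right_mono hν₂ m₂)
    _ ≤ a (m₁ * n₁) * a (m₂ * n₂) :=
          Ideal.mul_mono (a_pow a hgraded n₁ h₁ m₁ hm₁) (a_pow a hgraded n₂ (by omega) m₂ hm₂)
    _ ≤ a (m₁ * n₁ + m₂ * n₂) := hgraded _ _
          (Nat.one_le_iff_ne_zero.mpr (Nat.mul_ne_zero (by omega) (by omega))) (Nat.one_le_iff_ne_zero.mpr (Nat.mul_ne_zero (by omega) (by omega)))
    _ = a n := by rw [hrepr]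
end
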